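/- Let G^{Init} be a rooted binary tree, 𝒢 = {G_1,...,G_k} a set of pairwise separated (leaf-disjoint) subtrees of G^{Init} whose leaf sets together cover all leaves of G^{Init}, and let G^{TR} be a triplet-respecting supertree for G^{Init} and 𝒢. Then for every node x of G^{Init} whose subtree contains at least two of the trees of 𝒢 as subtrees, there exists a node y of G^{TR} such that L(y) = L(x). -/

import Mathlib

inductive BTree (α : Type) where
  | leaf : α → BTree α
  | node : BTree α → BTree α → BTree α
deriving DecidableEq

namespace BTree

variable {α : Type} [DecidableEq α] {σ : Type} [DecidableEq σ] {γ : Type} [DecidableEq γ]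

/-- leaf (label) set of a tree -/
def leaves : BTree α → Finset α
  | leaf a => {a}
  | node l r => leaves l ∪ leaves r

/-- the leaf labels are pairwise distinct -/
def nodupLeaves : BTree α → Prop
  | leaf _ => True
  | node l r => nodupLeaves l ∧ nodupLeaves r ∧ Disjoint (leaves l) (leaves r)

/-- the (unordered) bipartition `(Ll, Lr)` is compatible with the tree:
the whole leaf set lies in one part, or the leaf sets of the two root child
subtrees lie in opposite parts. -/
def compatible : BTree α → Finset α → Finset α → Prop
  | leaf a, Ll, Lr => a ∈ Ll ∨ a ∈ Lr
  | node l r, Ll, Lr =>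
      leaves l ∪ leaves r ⊆ Ll ∨ leaves l ∪ leaves r ⊆ Lr ∨
      (leaves l ⊆ Ll ∧ leaves r ⊆ Lr) ∨ (leaves l ⊆ Lr ∧ leaves r ⊆ Ll)

/-- union of the leaf sets of a list of trees -/
def unionLeaves (Gs : List (BTree α)) : Finset α :=
  Gs.foldr (fun g acc => leaves g ∪ acc) ∅

/-- `(Ll, Lr)` is a bipartition of the union of the leaf sets (both parts
nonempty) compatible with every tree in the list. -/
def isCompBip (Gs : List (BTree α)) (Ll Lr : Finset α) : Prop :=
  Ll ∪ Lr = unionLeaves Gs ∧ Disjoint Ll Lr ∧ Ll.Nonempty ∧ Lr.Nonempty ∧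
    ∀ G ∈ Gs, compatible G Ll Lr

/-- restriction `G|_L` : remove the leaves not in `L` and suppress the
resulting degree-2 nodes; `none` if no leaf of `G` lies in `L`. -/
def restrict : BTree α → Finset α → Option (BTree α)
  | leaf a, L => if a ∈ L then some (leaf a) else none
  | node l r, L =>
      match restrict l L, restrict r L with
      | some l', some r' => some (node l' r')
      | some l', none => some l'
      | none, some r' => some r'
      | none, none => none

/-- isomorphism of rooted leaf-labeled trees (children are unordered) -/
inductive Iso : BTree α → BTree α → Prop
  | leaf (a : α) : Iso (leaf a) (leaf a)
  | node {l r l' r' : BTree α} : Iso l l' → Iso r r' → Iso (node l r) (node l' r')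
  | swap {l r l' r' : BTree α} : Iso l r' → Iso r l' → Iso (node l r) (node l' r')

/-- `G` displays `G'` : the restriction of `G` to the leaves of `G'` is
isomorphic to `G'` (preserving leaf labels). -/
def displays (G G' : BTree α) : Prop :=
  ∃ t, restrict G (leaves G') = some t ∧ Iso t G'

/-- `Subtree t T` : `t` is a complete rooted subtree of `T` (i.e. `t = T[x]`
for some node `x` of `T`).  Equivalently, the root of `T` is a (weak)
ancestor of the root of `t`. -/
inductive Subtree : BTree α → BTree α → Prop
  | refl (t : BTree α) : Subtree t t
  | left {t l r : BTree α} : Subtree t l → Subtree t (node l r)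
  | right {t l r : BTree α} : Subtree t r → Subtree t (node l r)

/-- two nodes (complete subtrees) are separated: neither is a (weak)
ancestor of the other -/
def separated (u v : BTree α) : Prop := ¬ Subtree u v ∧ ¬ Subtree v u

/-- the subtree rooted at the lowest common ancestor of the leaf set `L` -/
def lcaSub : BTree α → Finset α → BTree α
  | leaf a, _ => leaf a
  | node l r, L =>
      if L ⊆ leaves l then lcaSub l L
      else if L ⊆ leaves r then lcaSub r L
      else node l r

/-- `T1` and `T2` induce the same rooted triplet topology on `{a, b, c}` -/
def sameTriplet (T1 T2 : BTree α) (a b c : α) : Prop :=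
  ∃ t1 t2, restrict T1 {a, b, c} = some t1 ∧ restrict T2 {a, b, c} = some t2 ∧ Iso t1 t2

/-- `GTR` is triplet respecting w.r.t. `GInit` and the family `Gs` : for any
three leaves taken from three distinct trees of `Gs`, `GInit` and `GTR`
induce the same rooted triplet topology. -/
def tripletRespecting (GInit GTR : BTree α) (Gs : List (BTree α)) : Prop :=
  ∀ G1 ∈ Gs, ∀ G2 ∈ Gs, ∀ G3 ∈ Gs, G1 ≠ G2 → G1 ≠ G3 → G2 ≠ G3 →
    ∀ a ∈ leaves G1, ∀ b ∈ leaves G2, ∀ c ∈ leaves G3, sameTriplet GInit GTR a b c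

/-- at least two (distinct) trees of `Gs` are subtrees of `t` : `|𝒢(t)| ≥ 2` -/
def atLeastTwo (Gs : List (BTree α)) (t : BTree α) : Prop :=
  ∃ Gi ∈ Gs, ∃ Gj ∈ Gs, Gi ≠ Gj ∧ Subtree Gi t ∧ Subtree Gj t

/-- `Graft T' T R` : `R` is obtained from `T` by grafting `T'` at some node
`x*` of `T`, i.e. subdividing the edge above `x*` (or adding a new root if
`x*` is the root) and attaching `T'` as the new sibling of `x*`. -/
inductive Graft (T' : BTree α) : BTree α → BTree α → Prop
  | atRootL (T : BTree α) : Graft T' T (node T' T)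
  | atRootR (T : BTree α) : Graft T' T (node T T')
  | left {l r g : BTree α} : Graft T' l g → Graft T' (node l r) (node g r)
  | right {l r g : BTree α} : Graft T' r g → Graft T' (node l r) (node l g)

/-- number of edges from the root of `u` down to the node `v`, if `v` is a
node (complete subtree) of `u` -/
def edist : BTree σ → BTree σ → Option ℕ
  | leaf a, v => if leaf a = v then some 0 else none
  | node l r, v =>
      if node l r = v then some 0 else
      match edist l v, edist r v with
      | some n, _ => some (n + 1)
      | none, some n => some (n + 1)
      | none, none => none

/-- number of nodes strictly between an ancestor `u` and a descendant `v` -/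
def inter (u v : BTree σ) : ℕ := (edist u v).getD 1 - 1

/-- node (`lca`) of the species tree `S` associated to a set `L` of genes -/
def specOf (S : BTree σ) (s : γ → σ) (L : Finset γ) : BTree σ := lcaSub S (L.image s)

/-- the species-tree node `s(x)` associated with a gene-tree node `x`
(lca of the species of the leaves below `x`) -/
def spec (S : BTree σ) (s : γ → σ) (t : BTree γ) : BTree σ := specOf S s (leaves t)

/-- the local LCA-reconciliation cost of a node whose own mapping is `su`
and whose children map to `sl` and `sr` -/
def localCost (su sl sr : BTree σ) : ℕ :=
  inter su sl + inter su sr +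
    (if su = sl ∧ su = sr then 1 else if su = sl ∨ su = sr then 2 else 0)

/-- number of duplication nodes of the LCA-reconciliation -/
def dupCount (S : BTree σ) (s : γ → σ) : BTree γ → ℕ
  | leaf _ => 0
  | node l r =>
      dupCount S s l + dupCount S s r +
      (if spec S s (node l r) = spec S s l ∨ spec S s (node l r) = spec S s r then 1 else 0)

/-- minimum number of losses of the LCA-reconciliation: for each edge `(x,c)`,
`inter(s(x), s(c))` losses, plus one more loss for each child `c` of a
duplication node `x` with `s(c) ≠ s(x)` -/
def lossCount (S : BTree σ) (s : γ → σ) : BTree γ → ℕ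
  | leaf _ => 0
  | node l r =>
      lossCount S s l + lossCount S s r +
      (if spec S s (node l r) = spec S s l ∨ spec S s (node l r) = spec S s r then
        (inter (spec S s (node l r)) (spec S s l) +
          if spec S s l = spec S s (node l r) then 0 else 1) +
        (inter (spec S s (node l r)) (spec S s r) +
          if spec S s r = spec S s (node l r) then 0 else 1)
      else
        inter (spec S s (node l r)) (spec S s l) + inter (spec S s (node l r)) (spec S s r))

/-- sum over all internal nodes of the local LCA-reconciliation costs -/
def totalLocal (S : BTree σ) (s : γ → σ) : BTree γ → ℕ
  | leaf _ => 0
  | node l r =>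
      totalLocal S s l + totalLocal S s r +
      localCost (spec S s (node l r)) (spec S s l) (spec S s r)

/-- `G` is a supertree for `Gs` : a tree on the union of the leaf sets
(each leaf once) displaying every tree of `Gs` -/
def isSupertree (Gs : List (BTree γ)) (G : BTree γ) : Prop :=
  leaves G = unionLeaves Gs ∧ nodupLeaves G ∧ ∀ Gi ∈ Gs, displays G Gi

/-- `MinSGT` : minimum LCA-reconciliation cost over all supertrees -/
noncomputable def reconMin (S : BTree σ) (s : γ → σ) (Gs : List (BTree γ)) : ℕ :=
  sInf {c | ∃ G : BTree γ, isSupertree Gs G ∧ totalLocal S s G = c}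

/-- restrictions `G_i|_L` of the trees of the list (dropping empty ones) -/
def restrictList (Gs : List (BTree γ)) (L : Finset γ) : List (BTree γ) :=
  Gs.filterMap fun G => restrict G L

/-- the four possible ordered choices for distributing a tree into the two
parts of a bipartition: whole tree left, whole tree right, left subtree
left & right subtree right, left subtree right & right subtree left -/
def pick : BTree α → ℕ → Finset α × Finset α
  | G, 0 => (leaves G, ∅)
  | G, 1 => (∅, leaves G)
  | node l r, 2 => (leaves l, leaves r)
  | node l r, _ => (leaves r, leaves l)
  | G, _ => (∅, leaves G)

/-- left part produced by a distribution `f` of choices -/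
def partsLeft (Gs : List (BTree α)) (f : Fin Gs.length → Fin 4) : Finset α :=
  Finset.univ.biUnion fun i => (pick (Gs.get i) (f i).val).1

/-- right part produced by a distribution `f` of choices -/
def partsRight (Gs : List (BTree α)) (f : Fin Gs.length → Fin 4) : Finset α :=
  Finset.univ.biUnion fun i => (pick (Gs.get i) (f i).val).2

/-- the complete subtree at a position (path from the root) -/
def subtreeAt : BTree α → List Bool → Option (BTree α)
  | t, [] => some t
  | leaf _, _ :: _ => none
  | node l _, false :: p => subtreeAt l p
  | node _ r, true :: p => subtreeAt r p

/-- the set of positions of internal nodes -/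
def internalPos : BTree α → Finset (List Bool)
  | leaf _ => ∅
  | node l r =>
      insert [] ((internalPos l).image (List.cons false) ∪
        (internalPos r).image (List.cons true))

end BTree

/-- labeled gene trees: each internal node carries `true` (Dup) or `false` (Spec) -/
inductive LTree (α : Type) where
  | leaf : α → LTree α
  | node : Bool → LTree α → LTree α → LTree α
deriving DecidableEq

namespace LTree

variable {α : Type} [DecidableEq α]

def leaves : LTree α → Finset α
  | leaf a => {a}
  | node _ l r => leaves l ∪ leaves r

/-- underlying unlabeled tree -/
def shape : LTree α → BTree α
  | leaf a => BTree.leaf a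
  | node _ l r => BTree.node (shape l) (shape r)

/-- the event label of the root (`none` for a leaf) -/
def rootEv : LTree α → Option Bool
  | leaf _ => none
  | node e _ _ => some e

inductive Subtree : LTree α → LTree α → Prop
  | refl (t : LTree α) : Subtree t t
  | left {t l r : LTree α} {e : Bool} : Subtree t l → Subtree t (node e l r)
  | right {t l r : LTree α} {e : Bool} : Subtree t r → Subtree t (node e l r)

/-- the subtree rooted at the lowest common ancestor of the leaf set `L` -/
def lcaSub : LTree α → Finset α → LTree α
  | leaf a, _ => leaf a
  | node e l r, L =>
      if L ⊆ leaves l then lcaSub l L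
      else if L ⊆ leaves r then lcaSub r L
      else node e l r

/-- `G` displays `G'` (topologically, ignoring labels) -/
def displaysL (G G' : LTree α) : Prop := BTree.displays (shape G) (shape G')

/-- `(G, ev_G)` is label-compatible with `(G', ev_{G'})` : every internal
node `x'` of `G'` has the same event label as `lca_G(L(x'))` -/
def labelCompatible (G G' : LTree α) : Prop :=
  ∀ (e : Bool) (l r : LTree α), Subtree (node e l r) G' →
    rootEv (lcaSub G (leaves (node e l r))) = some e

end LTree

/-!
Let `y` be the lowest common ancestor of `L(x)` in `G^{TR}`; it remains to show that no leaf `z`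
below `y` lies outside `x`. Every tree of `𝒢` meeting `x` lies inside `x`, and there are at least
two of them, so the two children of `y` contain leaves `a`, `b` of distinct trees of `𝒢(x)`.
A leaf `z ∉ L(x)` below `y` belongs to a third tree of `𝒢`. Then `G^{Init}` resolves the triplet
as `ab|z`, whereas `G^{TR}` separates `a` from `b` at `y`, contradicting triplet respect.
-/

namespace BTree

variable {α : Type}

theorem Subtree.trans {s t T : BTree α} (hst : Subtree s t) (htT : Subtree t T) :
    Subtree s T := by
  induction htT with
  | refl => exact hst
  | left _ ih => exact .left ih
  | right _ ih => exact .right ih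

variable [DecidableEq α]

theorem leaves_nonempty (T : BTree α) : T.leaves.Nonempty := by
  induction T with
  | leaf a => exact ⟨a, by simp [leaves]⟩
  | node l r ihl _ => exact ihl.mono (by simp [leaves])

theorem mem_unionLeaves {Gs : List (BTree α)} {w : α} :
    w ∈ unionLeaves Gs ↔ ∃ G ∈ Gs, w ∈ G.leaves := by
  induction Gs with
  | nil => simp [unionLeaves]
  | cons g gs ih => simp_all [unionLeaves]

namespace Subtree

theorem leaves_subset {u T : BTree α} (h : Subtree u T) : u.leaves ⊆ T.leaves := by
  induction h with
  | refl => exact subset_rfl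
  | left _ ih => exact ih.trans (by simp [leaves])
  | right _ ih => exact ih.trans (by simp [leaves])

theorem nodupLeaves {u T : BTree α} (h : Subtree u T) (hT : T.nodupLeaves) :
    u.nodupLeaves := by
  induction h with
  | refl => exact hT
  | left _ ih => exact ih hT.1
  | right _ ih => exact ih hT.2.1

theorem subtree_or_subtree {T u v : BTree α} (hT : T.nodupLeaves) (hu : Subtree u T)
    (hv : Subtree v T) (huv : (u.leaves ∩ v.leaves).Nonempty) :
    Subtree u v ∨ Subtree v u := by
  induction T generalizing u v with
  | leaf a => cases hu; exact .inr hv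
  | node l r ihl ihr =>
    obtain ⟨hl, hr, hlr⟩ := hT
    have cross {s t : BTree α} (hs : Subtree s l) (ht : Subtree t r)
        (hst : (s.leaves ∩ t.leaves).Nonempty) : False := by
      obtain ⟨w, hw⟩ := hst
      rw [Finset.mem_inter] at hw
      exact Finset.disjoint_left.1 hlr (hs.leaves_subset hw.1) (ht.leaves_subset hw.2)
    cases hu with
    | refl => exact .inr hv
    | left hu =>
      cases hv with
      | refl => exact .inl hu.left
      | left hv => exact ihl hl hu hv huv
      | right hv => exact (cross hu hv huv).elim
    | right hu =>
      cases hv with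
      | refl => exact .inl hu.right
      | left hv => exact (cross hv hu (by rwa [Finset.inter_comm])).elim
      | right hv => exact ihr hr hu hv huv

end Subtree

theorem Iso.leaves_eq {s t : BTree α} (h : Iso s t) : s.leaves = t.leaves := by
  induction h with
  | leaf => rfl
  | node _ _ ih₁ ih₂ => simp [leaves, ih₁, ih₂]
  | swap _ _ ih₁ ih₂ => simp [leaves, ih₁, ih₂, Finset.union_comm]

theorem restrict_eq_none_iff {T : BTree α} {S : Finset α} :
    restrict T S = none ↔ T.leaves ∩ S = ∅ := by
  induction T with
  | leaf a => by_cases ha : a ∈ S <;> simp [restrict, leaves, ha]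
  | node l r ihl ihr =>
    simp only [leaves, Finset.union_inter_distrib_right, Finset.union_eq_empty, ← ihl, ← ihr]
    cases hl : restrict l S <;> cases hr : restrict r S <;> simp [restrict, hl, hr]

theorem leaves_of_restrict_eq_some {T t : BTree α} {S : Finset α}
    (h : restrict T S = some t) : t.leaves = T.leaves ∩ S := by
  induction T generalizing t with
  | leaf a =>
    by_cases ha : a ∈ S
    · simp only [restrict, ha, if_true, Option.some.injEq] at h
      simp [← h, leaves, ha]
    · simp [restrict, ha] at h
  | node l r ihl ihr =>
    simp only [leaves, Finset.union_inter_distrib_right]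
    cases hl : restrict l S <;> cases hr : restrict r S <;>
      simp only [restrict, hl, hr, reduceCtorEq, Option.some.injEq] at h <;> subst h
    · simp [restrict_eq_none_iff.1 hl, ihr hr]
    · simp [restrict_eq_none_iff.1 hr, ihl hl]
    · simp [leaves, ihl hl, ihr hr]

theorem exists_restrict_eq_some {T : BTree α} {S : Finset α} (h : (T.leaves ∩ S).Nonempty) :
    ∃ t, restrict T S = some t :=
  Option.ne_none_iff_exists'.1 (mt restrict_eq_none_iff.1 h.ne_empty)

theorem restrict_node_of_restrict_right_eq_none {l r : BTree α} {S : Finset α}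
    (hr : restrict r S = none) : restrict (node l r) S = restrict l S := by
  cases hl : restrict l S <;> simp [restrict, hl, hr]

theorem restrict_node_of_restrict_left_eq_none {l r : BTree α} {S : Finset α}
    (hl : restrict l S = none) : restrict (node l r) S = restrict r S := by
  cases hr : restrict r S <;> simp [restrict, hl, hr]

theorem restrict_eq_restrict_of_subtree {T u : BTree α} {S : Finset α} (hT : T.nodupLeaves)
    (hu : Subtree u T) (hS : S ⊆ u.leaves) : restrict T S = restrict u S := by
  induction hu with
  | refl => rfl
  | @left l r hul ih =>
    obtain ⟨hl, -, hlr⟩ := hT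
    rw [restrict_node_of_restrict_right_eq_none, ih hl]
    exact restrict_eq_none_iff.2 <| Finset.disjoint_iff_inter_eq_empty.1 <|
      (hlr.mono_left (hS.trans hul.leaves_subset)).symm
  | @right l r hur ih =>
    obtain ⟨-, hr, hlr⟩ := hT
    rw [restrict_node_of_restrict_left_eq_none, ih hr]
    exact restrict_eq_none_iff.2 <| Finset.disjoint_iff_inter_eq_empty.1 <|
      hlr.mono_right (hS.trans hur.leaves_subset)

theorem inter_subset_of_restrict_eq_node {T x u v : BTree α} {S : Finset α}
    (hx : Subtree x T) (h : restrict T S = some (node u v)) :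
    x.leaves ∩ S ⊆ u.leaves ∨ x.leaves ∩ S ⊆ v.leaves ∨ T.leaves ∩ S ⊆ x.leaves := by
  induction hx generalizing u v with
  | refl => exact .inr (.inr Finset.inter_subset_left)
  | @left l r hxl ih =>
    have hxS : x.leaves ∩ S ⊆ l.leaves ∩ S := Finset.inter_subset_inter_right hxl.leaves_subset
    cases hl : restrict l S <;> cases hr : restrict r S <;>
      simp only [restrict, hl, hr, reduceCtorEq, Option.some.injEq, node.injEq] at h
    · rw [restrict_eq_none_iff.1 hl] at hxS
      exact .inl (hxS.trans (Finset.empty_subset _))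
    · subst h
      refine (ih hl).imp_right (Or.imp_right fun hlx => ?_)
      simpa [leaves, Finset.union_inter_distrib_right, restrict_eq_none_iff.1 hr] using hlx
    · obtain ⟨rfl, rfl⟩ := h
      exact .inl (leaves_of_restrict_eq_some hl ▸ hxS)
  | @right l r hxr ih =>
    have hxS : x.leaves ∩ S ⊆ r.leaves ∩ S := Finset.inter_subset_inter_right hxr.leaves_subset
    cases hl : restrict l S <;> cases hr : restrict r S <;>
      simp only [restrict, hl, hr, reduceCtorEq, Option.some.injEq, node.injEq] at h
    · subst h
      refine (ih hr).imp_right (Or.imp_right fun hrx => ?_)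
      simpa [leaves, Finset.union_inter_distrib_right, restrict_eq_none_iff.1 hl] using hrx
    · rw [restrict_eq_none_iff.1 hr] at hxS
      exact .inl (hxS.trans (Finset.empty_subset _))
    · obtain ⟨rfl, rfl⟩ := h
      exact .inr (.inl (leaves_of_restrict_eq_some hr ▸ hxS))

theorem lcaSub_subtree (T : BTree α) (L : Finset α) : Subtree (lcaSub T L) T := by
  induction T with
  | leaf => exact .refl _
  | node l r ihl ihr =>
    simp only [lcaSub]
    split_ifs
    exacts [ihl.left, ihr.right, .refl _]

theorem subset_leaves_lcaSub {T : BTree α} {L : Finset α} (h : L ⊆ T.leaves) :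
    L ⊆ (lcaSub T L).leaves := by
  induction T with
  | leaf => simpa [lcaSub] using h
  | node l r ihl ihr =>
    simp only [lcaSub]
    split_ifs with hl hr
    exacts [ihl hl, ihr hr, h]

theorem inter_nonempty_of_lcaSub_eq_node {T y₁ y₂ : BTree α} {L : Finset α}
    (h : L ⊆ T.leaves) (heq : lcaSub T L = node y₁ y₂) :
    (L ∩ y₁.leaves).Nonempty ∧ (L ∩ y₂.leaves).Nonempty := by
  induction T with
  | leaf => simp [lcaSub] at heq
  | node l r ihl ihr =>
    simp only [lcaSub] at heq
    split_ifs at heq with hl hr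
    · exact ihl hl heq
    · exact ihr hr heq
    · obtain ⟨rfl, rfl⟩ := node.inj heq
      obtain ⟨w₁, hw₁L, hw₁r⟩ := Finset.not_subset.1 hr
      obtain ⟨w₂, hw₂L, hw₂l⟩ := Finset.not_subset.1 hl
      exact ⟨⟨w₁, Finset.mem_inter.2 ⟨hw₁L, (Finset.mem_union.1 (h hw₁L)).resolve_right hw₁r⟩⟩,
        ⟨w₂, Finset.mem_inter.2 ⟨hw₂L, (Finset.mem_union.1 (h hw₂L)).resolve_left hw₂l⟩⟩⟩

/-- `T₁` resolves the triplet as `ab|z`, `T₂` does not. -/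
theorem not_sameTriplet_of_cluster {T₁ T₂ x y₁ y₂ : BTree α} {a b z : α}
    (hnd₂ : T₂.nodupLeaves) (hx : Subtree x T₁)
    (hy : Subtree (node y₁ y₂) T₂) (ha : a ∈ x.leaves) (hb : b ∈ x.leaves)
    (hz : z ∈ T₁.leaves) (hzx : z ∉ x.leaves) (ha₁ : a ∈ y₁.leaves) (hb₂ : b ∈ y₂.leaves)
    (hzy : z ∈ (node y₁ y₂).leaves) : ¬ sameTriplet T₁ T₂ a b z := by
  rintro ⟨s₁, s₂, h₁, h₂, hiso⟩
  set S : Finset α := {a, b, z}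
  have hy₁₂ : Disjoint y₁.leaves y₂.leaves := (hy.nodupLeaves hnd₂).2.2
  have hS : S ⊆ (node y₁ y₂).leaves := by
    simp only [S, Finset.insert_subset_iff, Finset.singleton_subset_iff]
    exact ⟨Finset.mem_union_left _ ha₁, Finset.mem_union_right _ hb₂, hzy⟩
  obtain ⟨t₁, ht₁⟩ := exists_restrict_eq_some (T := y₁) (S := S) ⟨a, by simp [S, ha₁]⟩
  obtain ⟨t₂, ht₂⟩ := exists_restrict_eq_some (T := y₂) (S := S) ⟨b, by simp [S, hb₂]⟩
  rw [restrict_eq_restrict_of_subtree hnd₂ hy hS] at h₂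
  simp only [restrict, ht₁, ht₂, Option.some.injEq] at h₂
  subst h₂
  have hb₁ : b ∉ t₁.leaves := by
    simp [leaves_of_restrict_eq_some ht₁, Finset.disjoint_right.1 hy₁₂ hb₂]
  have ha₂ : a ∉ t₂.leaves := by
    simp [leaves_of_restrict_eq_some ht₂, Finset.disjoint_left.1 hy₁₂ ha₁]
  have haS : a ∈ x.leaves ∩ S := by simp [S, ha]
  have hbS : b ∈ x.leaves ∩ S := by simp [S, hb]
  have hzS : z ∈ T₁.leaves ∩ S := by simp [S, hz]
  cases hiso with
  | node hu hv =>
    rcases inter_subset_of_restrict_eq_node hx h₁ with h | h | h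
    · exact hb₁ (hu.leaves_eq ▸ h hbS)
    · exact ha₂ (hv.leaves_eq ▸ h haS)
    · exact hzx (h hzS)
  | swap hu hv =>
    rcases inter_subset_of_restrict_eq_node hx h₁ with h | h | h
    · exact ha₂ (hu.leaves_eq ▸ h haS)
    · exact hb₁ (hv.leaves_eq ▸ h hbS)
    · exact hzx (h hzS)

theorem eq_of_subtree_of_pairwise_disjoint {Gs : List (BTree α)}
    (hdisj : Gs.Pairwise fun a b => Disjoint a.leaves b.leaves) {G G' : BTree α}
    (hG : G ∈ Gs) (hG' : G' ∈ Gs) (h : Subtree G G') : G = G' := by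
  by_contra hne
  have : Std.Symm fun a b : BTree α => Disjoint a.leaves b.leaves := ⟨fun _ _ h => h.symm⟩
  have hGG : Disjoint G.leaves G.leaves := (hdisj.forall hG hG' hne).mono_right h.leaves_subset
  exact (leaves_nonempty G).ne_empty (Finset.disjoint_self_iff_empty _ |>.1 hGG)

/-- `G` cannot lie above `x`, since it would then contain two disjoint trees of `Gs`. -/
theorem subtree_of_mem_of_atLeastTwo {T x G : BTree α} {Gs : List (BTree α)} {w : α}
    (hT : T.nodupLeaves) (hsub : ∀ Gi ∈ Gs, Subtree Gi T)
    (hdisj : Gs.Pairwise fun a b => Disjoint a.leaves b.leaves) (hx : Subtree x T)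
    (h2 : atLeastTwo Gs x) (hG : G ∈ Gs) (hwG : w ∈ G.leaves) (hwx : w ∈ x.leaves) :
    Subtree G x := by
  refine (Subtree.subtree_or_subtree hT (hsub G hG) hx ⟨w, Finset.mem_inter.2 ⟨hwG, hwx⟩⟩).resolve_right
    fun hxG => ?_
  obtain ⟨Gi, hGi, Gj, hGj, hij, hGix, hGjx⟩ := h2
  exact hij <| (eq_of_subtree_of_pairwise_disjoint hdisj hGi hG (hGix.trans hxG)).trans
    (eq_of_subtree_of_pairwise_disjoint hdisj hGj hG (hGjx.trans hxG)).symm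

theorem exists_subtree_inter_nonempty {T x : BTree α} {Gs : List (BTree α)} {B : Finset α}
    (hT : T.nodupLeaves) (hsub : ∀ Gi ∈ Gs, Subtree Gi T)
    (hdisj : Gs.Pairwise fun a b => Disjoint a.leaves b.leaves)
    (hcover : unionLeaves Gs = T.leaves) (hx : Subtree x T) (h2 : atLeastTwo Gs x)
    (hB : (x.leaves ∩ B).Nonempty) :
    ∃ G, (G ∈ Gs ∧ Subtree G x) ∧ (G.leaves ∩ B).Nonempty := by
  obtain ⟨w, hw⟩ := hB
  obtain ⟨hwx, hwB⟩ := Finset.mem_inter.1 hw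
  obtain ⟨G, hG, hwG⟩ := mem_unionLeaves.1 (hcover ▸ hx.leaves_subset hwx)
  exact ⟨G, ⟨hG, subtree_of_mem_of_atLeastTwo hT hsub hdisj hx h2 hG hwG hwx⟩,
    w, Finset.mem_inter.2 ⟨hwG, hwB⟩⟩

end BTree

theorem exists_ne_inter_nonempty {ι α : Type} [DecidableEq α] {P : ι → Prop} {F : ι → Finset α}
    {A B : Finset α} (hF : ∀ i, P i → (F i).Nonempty ∧ F i ⊆ A ∪ B)
    (hA : ∃ i, P i ∧ (F i ∩ A).Nonempty) (hB : ∃ j, P j ∧ (F j ∩ B).Nonempty)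
    (h2 : ∃ i j, P i ∧ P j ∧ i ≠ j) :
    ∃ i j, P i ∧ P j ∧ i ≠ j ∧ (F i ∩ A).Nonempty ∧ (F j ∩ B).Nonempty := by
  obtain ⟨i, hi, hiA⟩ := hA
  obtain ⟨j, hj, hjB⟩ := hB
  by_cases hij : i = j
  swap
  · exact ⟨i, j, hi, hj, hij, hiA, hjB⟩
  subst hij
  obtain ⟨k, hk, hki⟩ : ∃ k, P k ∧ k ≠ i := by
    obtain ⟨k, k', hk, hk', hkk'⟩ := h2
    by_cases hki : k = i
    exacts [⟨k', hk', fun h => hkk' (hki.trans h.symm)⟩, ⟨k, hk, hki⟩]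
  obtain ⟨c, hc⟩ := (hF k hk).1
  rcases Finset.mem_union.1 ((hF k hk).2 hc) with hcA | hcB
  · exact ⟨k, i, hk, hi, hki, ⟨c, Finset.mem_inter.2 ⟨hc, hcA⟩⟩, hjB⟩
  · exact ⟨i, k, hi, hk, hki.symm, hiA, ⟨c, Finset.mem_inter.2 ⟨hc, hcB⟩⟩⟩

theorem stmt2_general {α : Type} [DecidableEq α] (GInit GTR : BTree α) (Gs : List (BTree α))
    (hndI : GInit.nodupLeaves) (hndT : GTR.nodupLeaves)
    (hsub : ∀ Gi ∈ Gs, BTree.Subtree Gi GInit)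
    (hdisj : Gs.Pairwise fun a b => Disjoint a.leaves b.leaves)
    (hcover : BTree.unionLeaves Gs = GInit.leaves)
    (hleaves : GTR.leaves = GInit.leaves)
    (htrip : BTree.tripletRespecting GInit GTR Gs)
    (x : BTree α) (hx : BTree.Subtree x GInit)
    (h2 : BTree.atLeastTwo Gs x) :
    ∃ y, BTree.Subtree y GTR ∧ y.leaves = x.leaves := by
  have hxT : x.leaves ⊆ GTR.leaves := hleaves ▸ hx.leaves_subset
  have hxy := BTree.subset_leaves_lcaSub hxT
  have hy := BTree.lcaSub_subtree GTR x.leaves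
  refine ⟨BTree.lcaSub GTR x.leaves, hy, ?_⟩
  cases hY : BTree.lcaSub GTR x.leaves with
  | leaf c =>
    rw [hY] at hxy
    exact ((BTree.leaves_nonempty x).subset_singleton_iff.1 hxy).symm
  | node y₁ y₂ =>
    rw [hY] at hxy hy
    obtain ⟨hx₁, hx₂⟩ := BTree.inter_nonempty_of_lcaSub_eq_node hxT hY
    have hmeet {B} := BTree.exists_subtree_inter_nonempty (B := B) hndI hsub hdisj hcover hx h2
    obtain ⟨Gi, hGi, Gj, hGj, hij, hGix, hGjx⟩ := h2
    obtain ⟨Ga, Gb, ⟨hGa, hGax⟩, ⟨hGb, hGbx⟩, hab, ⟨a, ha⟩, ⟨b, hb⟩⟩ :=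
      exists_ne_inter_nonempty (F := BTree.leaves) (A := y₁.leaves) (B := y₂.leaves)
        (fun G hG => ⟨BTree.leaves_nonempty G, hG.2.leaves_subset.trans hxy⟩)
        (hmeet hx₁) (hmeet hx₂) ⟨Gi, Gj, ⟨hGi, hGix⟩, ⟨hGj, hGjx⟩, hij⟩
    rw [Finset.mem_inter] at ha hb
    refine Finset.Subset.antisymm (fun z hz => ?_) hxy
    by_contra hzx
    have hzI : z ∈ GInit.leaves := hleaves ▸ hy.leaves_subset hz
    obtain ⟨Gc, hGc, hzc⟩ := BTree.mem_unionLeaves.1 (hcover ▸ hzI)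
    have hca : Ga ≠ Gc := fun h => hzx (hGax.leaves_subset (h ▸ hzc))
    have hcb : Gb ≠ Gc := fun h => hzx (hGbx.leaves_subset (h ▸ hzc))
    exact BTree.not_sameTriplet_of_cluster hndT hx hy (hGax.leaves_subset ha.1)
      (hGbx.leaves_subset hb.1) hzI hzx ha.2 hb.2 hz
      (htrip Ga hGa Gb hGb Gc hGc hab hca hcb a ha.1 b hb.1 z hzc)

/-- in a triplet-respecting supertree, every node `x` of
`G^{Init}` with `|𝒢(x)| ≥ 2` has a corresponding node `y` with the same
leaf set. -/
theorem stmt2 {α : Type} [DecidableEq α] (GInit GTR : BTree α) (Gs : List (BTree α))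
    (hndI : GInit.nodupLeaves) (hndT : GTR.nodupLeaves)
    (hsub : ∀ Gi ∈ Gs, BTree.Subtree Gi GInit)
    (hdisj : Gs.Pairwise fun a b => Disjoint a.leaves b.leaves)
    (hcover : BTree.unionLeaves Gs = GInit.leaves)
    (hleaves : GTR.leaves = GInit.leaves)
    (hdisp : ∀ Gi ∈ Gs, GTR.displays Gi)
    (htrip : BTree.tripletRespecting GInit GTR Gs)
    (x : BTree α) (hx : BTree.Subtree x GInit)
    (h2 : BTree.atLeastTwo Gs x) :
    ∃ y, BTree.Subtree y GTR ∧ y.leaves = x.leaves :=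
  stmt2_general GInit GTR Gs hndI hndT hsub hdisj hcover hleaves htrip x hx h2
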